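/- Let R be a commutative ring, let f, g ∈ R[x₁, …, xₙ], let I be the ideal of R[x₁, …, xₙ] generated by the partial derivatives ∂₁g, …, ∂ₙg, and suppose f − g ∈ I². Then there exists a matrix of polynomials (A_{kl})_{1 ≤ k,l ≤ n} with entries in R[x₁, …, xₙ] such that for every i, the polynomial ∂ᵢf − ∂ᵢg − Σ_{k,l} (∂ᵢ∂ₖg) · A_{kl} · (∂ₗg) lies in I². In other words, df ≡ dg + H_g · A · dg modulo I², where H_g is the Hessian matrix of g. -/

import Mathlib

open MvPolynomial

/-!
Write `f - g = ∑ₖₗ cₖₗ ∂ₖg ∂ₗg`. Differentiating by Leibniz, the terms where `∂ᵢ` falls on `cₖₗ`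
stay in `I²`, and the remaining ones are `∑ₖₗ ∂ᵢ∂ₖg (cₖₗ + cₗₖ) ∂ₗg`, so `A = c + cᵀ` works.
-/

namespace Ideal

variable {A ι : Type*} [CommRing A] (v : ι → A)

theorem span_range_sq :
    span (Set.range v) ^ 2 = span (Set.range fun p : ι × ι => v p.1 * v p.2) := by
  rw [sq, span_mul_span', ← Set.image2_mul, Set.image2_range]

theorem mul_mul_mem_span_range_sq (a : A) (k l : ι) :
    a * v k * v l ∈ span (Set.range v) ^ 2 := by
  rw [mul_assoc, sq]
  exact mul_mem_left _ _ (mul_mem_mul (subset_span ⟨k, rfl⟩) (subset_span ⟨l, rfl⟩))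

theorem exists_eq_sum_mul_mul_of_mem_span_range_sq [Fintype ι] {x : A}
    (hx : x ∈ span (Set.range v) ^ 2) :
    ∃ c : ι → ι → A, x = ∑ k, ∑ l, c k l * v k * v l := by
  rw [span_range_sq] at hx
  obtain ⟨c, hc⟩ := (Submodule.mem_span_range_iff_exists_fun _).mp hx
  refine ⟨fun k l => c (k, l), ?_⟩
  simp only [← hc, Fintype.sum_prod_type, smul_eq_mul, mul_assoc]

theorem exists_derivation_sub_sum_mem_span_range_sq {R : Type*} [CommSemiring R] [Algebra R A]
    [Fintype ι] {x : A} (hx : x ∈ span (Set.range v) ^ 2) :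
    ∃ B : ι → ι → A, ∀ D : Derivation R A A,
      D x - ∑ k, ∑ l, D (v k) * B k l * v l ∈ span (Set.range v) ^ 2 := by
  obtain ⟨c, rfl⟩ := exists_eq_sum_mul_mul_of_mem_span_range_sq v hx
  refine ⟨fun k l => c k l + c l k, fun D => ?_⟩
  have hswap : ∑ k, ∑ l, D (v k) * c l k * v l = ∑ k, ∑ l, c k l * v k * D (v l) := by
    rw [Finset.sum_comm]
    exact Finset.sum_congr rfl fun k _ => Finset.sum_congr rfl fun l _ => by ring
  have hleibniz : ∀ k l, D (c k l * v k * v l)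
      = D (c k l) * v k * v l + D (v k) * c k l * v l + c k l * v k * D (v l) := by
    intro k l
    simp only [Derivation.leibniz, smul_eq_mul]
    ring
  have hexpand : D (∑ k, ∑ l, c k l * v k * v l) - ∑ k, ∑ l, D (v k) * (c k l + c l k) * v l
      = ∑ k, ∑ l, D (c k l) * v k * v l := by
    simp only [map_sum, hleibniz, mul_add, add_mul, Finset.sum_add_distrib, hswap]
    abel
  rw [hexpand]
  exact _root_.sum_mem fun k _ => _root_.sum_mem fun l _ => mul_mul_mem_span_range_sq v _ k l

end Ideal

/-- If `f - g ∈ I²` where `I = (∂₁g, …, ∂ₙg)`, then there is a matrix `A` of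
polynomials with `df ≡ dg + H_g · A · dg (mod I²)`, i.e.
`∂ᵢf - ∂ᵢg - ∑ₖₗ (∂ᵢ∂ₖg) Aₖₗ (∂ₗg) ∈ I²` for all `i`. -/
theorem exists_matrix_df_eq_dg_add_hessian_mul
    {R : Type*} [CommRing R] {n : ℕ}
    (f g : MvPolynomial (Fin n) R)
    (I : Ideal (MvPolynomial (Fin n) R))
    (hI : I = Ideal.span (Set.range fun i => pderiv i g))
    (hfg : f - g ∈ I ^ 2) :
    ∃ A : Fin n → Fin n → MvPolynomial (Fin n) R,
      ∀ i : Fin n,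
        pderiv i f - pderiv i g -
          ∑ k, ∑ l, pderiv i (pderiv k g) * A k l * pderiv l g ∈ I ^ 2 := by
  subst hI
  obtain ⟨A, hA⟩ := Ideal.exists_derivation_sub_sum_mem_span_range_sq (R := R) _ hfg
  refine ⟨A, fun i => ?_⟩
  simpa only [map_sub] using hA (pderiv i)
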